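/- arXiv:1904.04337 — 2 statements merged into one kernel-verified Lean document; each statement's English description precedes it below -/
import Mathlib

section
/- Let t be a prime and q₁ < q₂ < … < q_k distinct odd primes such that t is a primitive root modulo each q_j, gcd(q_i − 1, q_j − 1) = 2 for i ≠ j, and let r be an integer coprime to each q_j that is a quadratic non-residue modulo every q_j. Then there exists γ ∈ ℕ with t^γ ≡ r (mod q₁·q₂⋯q_k). -/
/-! Modulo each `q_j` the primitive root `t` hits the non-residue `r` at an odd exponent `e_j`,
so the `e_j` agree modulo `2 = gcd (q_i - 1) (q_j - 1)`; halving the moduli makes them pairwise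
coprime, and the Chinese remainder theorem yields one exponent that works modulo every `q_j`,
hence modulo their product. -/

open Finset Function

theorem FiniteField.exists_pow_eq_of_orderOf_eq_card_sub_one {K : Type*} [Field K] [Fintype K]
    {g x : K} (hg : orderOf g = Fintype.card K - 1) (hx : x ≠ 0) : ∃ n, g ^ n = x := by
  have : NeZero (orderOf g) := ⟨hg ▸ (Nat.sub_pos_of_lt Fintype.one_lt_card).ne'⟩
  obtain ⟨n, -, hn⟩ := (IsPrimitiveRoot.orderOf g).eq_pow_of_pow_eq_one
    (hg ▸ FiniteField.pow_card_sub_one_eq_one x hx)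
  exact ⟨n, hn⟩

theorem FiniteField.exists_odd_pow_eq_of_not_isSquare {K : Type*} [Field K] [Fintype K]
    {g x : K} (hg : orderOf g = Fintype.card K - 1) (hx : ¬IsSquare x) :
    ∃ n, Odd n ∧ g ^ n = x := by
  obtain ⟨n, hn⟩ := exists_pow_eq_of_orderOf_eq_card_sub_one hg (x := x) fun h => hx (h ▸ .zero)
  exact ⟨n, Nat.not_even_iff_odd.mp fun he => hx (hn ▸ he.isSquare_pow g), hn⟩

theorem Nat.exists_modEq_of_odd_of_gcd_eq_two {ι : Type*} (s : Finset ι) (e n : ι → ℕ)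
    (he : ∀ i ∈ s, Odd (e i)) (hn : ∀ i ∈ s, Even (n i)) (hn0 : ∀ i ∈ s, n i ≠ 0)
    (hgcd : (s : Set ι).Pairwise fun i j => Nat.gcd (n i) (n j) = 2) :
    ∃ x, ∀ i ∈ s, x ≡ e i [MOD n i] := by
  choose! d hd using he
  choose! m hm using hn
  have hm0 : ∀ i ∈ s, m i ≠ 0 := fun i hi h => hn0 i hi (by rw [hm i hi, h])
  have hcop : (s : Set ι).Pairwise (Nat.Coprime on m) := by
    intro i hi j hj hij
    have h2 : Nat.gcd (n i) (n j) = 2 := hgcd hi hj hij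
    rw [hm i hi, hm j hj, ← two_mul, ← two_mul, Nat.gcd_mul_left] at h2
    exact Nat.eq_of_mul_eq_mul_left two_pos (h2.trans (mul_one 2).symm)
  obtain ⟨x, hx⟩ := chineseRemainderOfFinset d m s hm0 hcop
  refine ⟨2 * x + 1, fun i hi => ?_⟩
  rw [hd i hi, hm i hi, ← two_mul]
  exact ((hx i hi).mul_left' 2).add_right 1

theorem Int.modEq_prod_of_pairwise_coprime {ι : Type*} {s : Finset ι} {n : ι → ℕ}
    (hco : (s : Set ι).Pairwise (Nat.Coprime on n)) {a b : ℤ}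
    (h : ∀ i ∈ s, a ≡ b [ZMOD n i]) : a ≡ b [ZMOD ∏ i ∈ s, n i] := by
  rw [Int.modEq_iff_dvd]
  exact Finset.prod_dvd_of_coprime (hco.mono' fun _ _ => Nat.isCoprime_iff_coprime.mpr)
    fun i hi => (h i hi).dvd

theorem discrete_log_crt_general (t k : ℕ)
    (qs : ℕ → ℕ)
    (hprime : ∀ j ∈ Finset.Icc 1 k, (qs j).Prime)
    (hodd : ∀ j ∈ Finset.Icc 1 k, Odd (qs j))
    (hmono : ∀ i ∈ Finset.Icc 1 k, ∀ j ∈ Finset.Icc 1 k, i < j → qs i < qs j)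
    (hprimroot : ∀ j ∈ Finset.Icc 1 k, orderOf (t : ZMod (qs j)) = qs j - 1)
    (hgcd : ∀ i ∈ Finset.Icc 1 k, ∀ j ∈ Finset.Icc 1 k, i ≠ j →
      Nat.gcd (qs i - 1) (qs j - 1) = 2)
    (r : ℤ)
    (hnres : ∀ j ∈ Finset.Icc 1 k, ¬ IsSquare ((r : ZMod (qs j)))) :
    ∃ γ : ℕ, (t : ℤ) ^ γ ≡ r [ZMOD (∏ j ∈ Finset.Icc 1 k, qs j)] := by
  have hlog : ∀ j ∈ Icc 1 k, ∃ e, Odd e ∧ (t : ZMod (qs j)) ^ e = r := by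
    intro j hj
    have := Fact.mk (hprime j hj)
    exact FiniteField.exists_odd_pow_eq_of_not_isSquare
      (by rw [ZMod.card, hprimroot j hj]) (hnres j hj)
  choose! e he_odd he using hlog
  obtain ⟨γ, hγ⟩ := Nat.exists_modEq_of_odd_of_gcd_eq_two (Icc 1 k) e (fun j => qs j - 1)
    he_odd (fun j hj => Nat.Odd.sub_odd (hodd j hj) odd_one)
    (fun j hj => Nat.sub_ne_zero_of_lt (hprime j hj).one_lt) fun i hi j hj => hgcd i hi j hj
  have hcop : (Icc 1 k : Set ℕ).Pairwise (Nat.Coprime on qs) := fun i hi j hj hij =>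
    (Nat.coprime_primes (hprime i hi) (hprime j hj)).mpr
      ((show StrictMonoOn qs (Icc 1 k) from hmono).injOn.ne hi hj hij)
  refine ⟨γ, Int.modEq_prod_of_pairwise_coprime hcop fun j hj => ?_⟩
  rw [← ZMod.intCast_eq_intCast_iff, Int.cast_pow, Int.cast_natCast,
    ← he j hj, ← pow_mod_orderOf, hprimroot j hj, hγ j hj, ← hprimroot j hj, pow_mod_orderOf]

theorem discrete_log_crt (t k : ℕ) (ht : t.Prime) (hk : 1 ≤ k)
    (qs : ℕ → ℕ)
    (hprime : ∀ j ∈ Finset.Icc 1 k, (qs j).Prime)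
    (hodd : ∀ j ∈ Finset.Icc 1 k, Odd (qs j))
    (hmono : ∀ i ∈ Finset.Icc 1 k, ∀ j ∈ Finset.Icc 1 k, i < j → qs i < qs j)
    (hprimroot : ∀ j ∈ Finset.Icc 1 k, orderOf (t : ZMod (qs j)) = qs j - 1)
    (hgcd : ∀ i ∈ Finset.Icc 1 k, ∀ j ∈ Finset.Icc 1 k, i ≠ j →
      Nat.gcd (qs i - 1) (qs j - 1) = 2)
    (r : ℤ)
    (hcop : ∀ j ∈ Finset.Icc 1 k, Int.gcd r (qs j) = 1)
    (hnres : ∀ j ∈ Finset.Icc 1 k, ¬ IsSquare ((r : ZMod (qs j)))) :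
    ∃ γ : ℕ, (t : ℤ) ^ γ ≡ r [ZMOD (∏ j ∈ Finset.Icc 1 k, qs j)] :=
  discrete_log_crt_general t k qs hprime hodd hmono hprimroot hgcd r hnres
end

section
/- Let q ≥ 2 and let f : ℕ → ℂ be a completely multiplicative q-automatic function such that infinitely many primes p satisfy f(p) = 0. Then f(p) = 0 for all sufficiently large primes p. -/
def CompletelyMultiplicative (f : ℕ → ℂ) : Prop :=
  f 1 = 1 ∧ ∀ m n : ℕ, f (m * n) = f m * f n

def qKernel (q : ℕ) (f : ℕ → ℂ) : Set (ℕ → ℂ) :=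
  {g | ∃ i, 1 ≤ i ∧ ∃ r, r < q ^ i ∧ g = fun n => f (q ^ i * n + r)}

/-!
The nonzero elements of the `q`-kernel form a finite automaton reading the base-`q` digits of `n`
from the least significant one. If a state `s = (x ↦ f (q ^ c * x + u))` had two different loops
of the same length `L`, the two affine maps `x ↦ q ^ L * x + Mᵢ` would preserve a level set of a
nonzero value of `s`; modulo a large prime `p` with `f p = 0` they permute its image and so
generate a nonzero translation, whence the level set meets the residue class where
`p ∣ q ^ c * x + u`, on which `s` vanishes. So every state has at most one loop of each length,
and then the number of `n < q ^ ℓ` with `f n ≠ 0` is bounded by a polynomial in `ℓ` of degree the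
number `D` of states. But if infinitely many primes had `f p ≠ 0`, the products of powers of
`D + 1` of them would give `(E + 1) ^ (D + 1)` such `n` below `q ^ O(E)`.
-/

open Finset
open scoped Classical

section Paths

variable {α : Type*} {q : ℕ}

/-- The state reached from `t` after reading the `j` lowest base-`q` digits of `n`. In particular
`kernelSlice q s L M = s` says that the word of the `L` lowest digits of `M` is a loop at `s`. -/
def kernelSlice (q : ℕ) (t : ℕ → α) (j n : ℕ) : ℕ → α := fun x => t (q ^ j * x + n % q ^ j)

@[simp]
lemma kernelSlice_zero (t : ℕ → α) (n : ℕ) : kernelSlice q t 0 n = t := by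
  funext x; simp [kernelSlice, Nat.mod_one]

lemma kernelSlice_add (t : ℕ → α) (i j n : ℕ) :
    kernelSlice q t (i + j) n = kernelSlice q (kernelSlice q t i n) j (n / q ^ i) := by
  funext x
  simp only [kernelSlice, pow_add, Nat.mod_mul]
  ring_nf

lemma kernelSlice_mod (t : ℕ → α) (j n : ℕ) :
    kernelSlice q t j (n % q ^ j) = kernelSlice q t j n := by
  funext x; simp only [kernelSlice, Nat.mod_mod]

def HasUniqueLoops (q : ℕ) (s : ℕ → α) : Prop :=
  ∀ L M₁ M₂, kernelSlice q s L M₁ = s → kernelSlice q s L M₂ = s → M₁ % q ^ L = M₂ % q ^ L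

noncomputable def pathSet (q : ℕ) (V : Finset (ℕ → α)) (t : ℕ → α) (ℓ : ℕ) : Finset ℕ :=
  {n ∈ range (q ^ ℓ) | ∀ j ≤ ℓ, kernelSlice q t j n ∈ V}

lemma pathSet_eq_empty {V : Finset (ℕ → α)} {t : ℕ → α} (ht : t ∉ V) (ℓ : ℕ) :
    pathSet q V t ℓ = ∅ :=
  filter_false_of_mem fun n _ hn => ht (by simpa using hn 0 (Nat.zero_le ℓ))

lemma card_returning_le_one {t : ℕ → α} (ht : HasUniqueLoops q t) (ℓ : ℕ) :
    #{n ∈ range (q ^ ℓ) | kernelSlice q t ℓ n = t} ≤ 1 := by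
  refine card_le_one.mpr fun a ha b hb => ?_
  simp only [mem_filter, mem_range] at ha hb
  simpa [Nat.mod_eq_of_lt ha.1, Nat.mod_eq_of_lt hb.1] using ht ℓ a b ha.2 hb.2

noncomputable def lastVisit (q : ℕ) (t : ℕ → α) (ℓ n : ℕ) : ℕ :=
  Nat.findGreatest (fun j => kernelSlice q t j n = t) ℓ

lemma kernelSlice_lastVisit (t : ℕ → α) (ℓ n : ℕ) : kernelSlice q t (lastVisit q t ℓ n) n = t :=
  Nat.findGreatest_spec (P := fun j => kernelSlice q t j n = t) (Nat.zero_le ℓ)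
    (kernelSlice_zero t n)

lemma kernelSlice_ne_of_lastVisit_lt {t : ℕ → α} {ℓ n j : ℕ} (h : lastVisit q t ℓ n < j)
    (hj : j ≤ ℓ) : kernelSlice q t j n ≠ t :=
  Nat.findGreatest_is_greatest h hj

lemma div_mem_pathSet_erase {V : Finset (ℕ → α)} {t : ℕ → α} {ℓ n : ℕ} (hq : 0 < q)
    (hn : n ∈ pathSet q V t ℓ) (hL : lastVisit q t ℓ n < ℓ) :
    n / q ^ (lastVisit q t ℓ n + 1) ∈ pathSet q (V.erase t)
      (kernelSlice q t 1 ((n / q ^ lastVisit q t ℓ n) % q)) (ℓ - lastVisit q t ℓ n - 1) := by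
  set L := lastVisit q t ℓ n
  simp only [pathSet, mem_filter, mem_range] at hn ⊢
  have hstate : ∀ j, kernelSlice q t (L + 1 + j) n
      = kernelSlice q (kernelSlice q t 1 ((n / q ^ L) % q)) j (n / q ^ (L + 1)) := by
    intro j
    have hdigit := kernelSlice_mod (q := q) t 1 (n / q ^ L)
    rw [pow_one] at hdigit
    rw [kernelSlice_add, kernelSlice_add, kernelSlice_lastVisit, hdigit]
  refine ⟨?_, fun j hj => ?_⟩
  · rw [Nat.div_lt_iff_lt_mul (by positivity), ← pow_add]
    exact hn.1.trans_le (Nat.pow_le_pow_right hq (by omega))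
  · rw [← hstate]
    exact mem_erase.mpr
      ⟨kernelSlice_ne_of_lastVisit_lt (ℓ := ℓ) (by omega) (by omega), hn.2 _ (by omega)⟩

lemma eq_mod_add_pow_mul_digit_add (q L n : ℕ) :
    n = n % q ^ L + q ^ L * (n / q ^ L % q + q * (n / q ^ (L + 1))) := by
  rw [pow_succ, ← Nat.div_div_eq_div_mul, Nat.mod_add_div, Nat.mod_add_div]

/-- A path is determined by its last visit to `t`, the next digit, and the rest of the path:
the part before the last visit is a loop at `t`, hence unique. -/
lemma card_fiber_lastVisit_le {V : Finset (ℕ → α)} {t : ℕ → α} (hq : 0 < q)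
    (ht : HasUniqueLoops q t) (ℓ L d : ℕ) :
    #{n ∈ {n ∈ pathSet q V t ℓ | lastVisit q t ℓ n < ℓ} |
        (lastVisit q t ℓ n, n / q ^ lastVisit q t ℓ n % q) = (L, d)} ≤
      #(pathSet q (V.erase t) (kernelSlice q t 1 d) (ℓ - L - 1)) := by
  refine card_le_card_of_injOn (· / q ^ (L + 1)) (fun n hn => ?_) (fun n hn n' hn' hdiv => ?_)
  · simp only [mem_coe, mem_filter, Prod.mk.injEq] at hn
    obtain ⟨⟨hn, hlt⟩, rfl, rfl⟩ := hn
    exact div_mem_pathSet_erase hq hn hlt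
  · simp only [mem_coe, mem_filter, Prod.mk.injEq] at hn hn'
    obtain ⟨-, rfl, hd⟩ := hn
    obtain ⟨-, hL, hd'⟩ := hn'
    set L := lastVisit q t ℓ n
    rw [hL] at hd'
    have hloop := ht L n n' (kernelSlice_lastVisit t ℓ n) (hL ▸ kernelSlice_lastVisit t ℓ n')
    calc n = n % q ^ L + q ^ L * (n / q ^ L % q + q * (n / q ^ (L + 1))) :=
          eq_mod_add_pow_mul_digit_add q L n
      _ = n' % q ^ L + q ^ L * (n' / q ^ L % q + q * (n' / q ^ (L + 1))) := by
          rw [hloop, hd, hd', show n / q ^ (L + 1) = n' / q ^ (L + 1) from hdiv]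
      _ = n' := (eq_mod_add_pow_mul_digit_add q L n').symm

theorem card_pathSet_le (hq : 0 < q) (V : Finset (ℕ → α)) (hV : ∀ s ∈ V, HasUniqueLoops q s)
    (t : ℕ → α) (ℓ : ℕ) : #(pathSet q V t ℓ) ≤ (q * ℓ + 1) ^ #V := by
  induction V using Finset.strongInduction generalizing t ℓ with
  | H V ih =>
  by_cases ht : t ∈ V
  swap
  · simp [pathSet_eq_empty ht]
  set X := (q * ℓ + 1) ^ (#V - 1)
  have hleave : #{n ∈ pathSet q V t ℓ | lastVisit q t ℓ n < ℓ} ≤ X * (ℓ * q) := by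
    have hcard := card_le_mul_card_image_of_maps_to
      (s := {n ∈ pathSet q V t ℓ | lastVisit q t ℓ n < ℓ}) (t := range ℓ ×ˢ range q)
      (f := fun n => (lastVisit q t ℓ n, n / q ^ lastVisit q t ℓ n % q))
      (fun n hn => by simpa using ⟨(mem_filter.mp hn).2, Nat.mod_lt _ hq⟩) X
      (fun ⟨L, d⟩ hLd => ?_)
    · simpa using hcard
    calc _ ≤ #(pathSet q (V.erase t) (kernelSlice q t 1 d) (ℓ - L - 1)) :=
          card_fiber_lastVisit_le hq (hV t ht) ℓ L d
      _ ≤ (q * (ℓ - L - 1) + 1) ^ #(V.erase t) :=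
          ih _ (erase_ssubset ht) (fun s hs => hV s (mem_of_mem_erase hs)) _ _
      _ ≤ X := by
          rw [card_erase_of_mem ht]
          exact Nat.pow_le_pow_left (by gcongr; omega) _
  have hreturn : #{n ∈ pathSet q V t ℓ | ¬ lastVisit q t ℓ n < ℓ} ≤ 1 := by
    refine (card_le_card fun n hn => ?_).trans (card_returning_le_one (hV t ht) ℓ)
    simp only [pathSet, mem_filter] at hn ⊢
    have hL : lastVisit q t ℓ n = ℓ := le_antisymm (Nat.findGreatest_le ℓ) (not_lt.mp hn.2)
    exact ⟨hn.1.1, hL ▸ kernelSlice_lastVisit t ℓ n⟩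
  have hX : 1 ≤ X := Nat.one_le_pow _ _ (by omega)
  have hV1 : #V = #V - 1 + 1 := (Nat.succ_pred_eq_of_pos (card_pos.mpr ⟨t, ht⟩)).symm
  calc #(pathSet q V t ℓ)
      = #{n ∈ pathSet q V t ℓ | lastVisit q t ℓ n < ℓ}
        + #{n ∈ pathSet q V t ℓ | ¬ lastVisit q t ℓ n < ℓ} :=
        (card_filter_add_card_filter_not _).symm
    _ ≤ X * (ℓ * q) + X := by omega
    _ = (q * ℓ + 1) ^ #V := by rw [hV1, pow_succ]; ring

lemma filter_ne_zero_subset_pathSet [Zero α] {t : ℕ → α} {V : Finset (ℕ → α)}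
    (hV : ∀ j n, kernelSlice q t j n ≠ 0 → kernelSlice q t j n ∈ V)
    (ℓ : ℕ) : {n ∈ range (q ^ ℓ) | t n ≠ 0} ⊆ pathSet q V t ℓ := by
  intro n hn
  rw [mem_filter] at hn
  refine mem_filter.mpr ⟨hn.1, fun j _ => hV j n fun h => hn.2 ?_⟩
  simpa [kernelSlice, Nat.div_add_mod] using congrFun h (n / q ^ j)

end Paths

open Set in
/-- `y ↦ a y + b₁` permutes `T`, so `T` is also closed under `y ↦ y + (b₂ - b₁) / a`,
and the multiples of a nonzero element exhaust `ZMod p`. -/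
theorem ZMod.eq_univ_of_mapsTo_affine {p : ℕ} [Fact p.Prime] {T : Set (ZMod p)}
    (hT : T.Nonempty) {a b₁ b₂ : ZMod p} (ha : a ≠ 0) (hb : b₁ ≠ b₂)
    (h₁ : MapsTo (fun y => a * y + b₁) T T) (h₂ : MapsTo (fun y => a * y + b₂) T T) :
    T = univ := by
  have hsurj : SurjOn (fun y => a * y + b₁) T T :=
    ((T.toFinite.injOn_iff_bijOn_of_mapsTo h₁).mp
      fun y _ z _ h => mul_left_cancel₀ ha (add_right_cancel h)).surjOn
  set δ := (b₂ - b₁) / a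
  have hδ : δ ≠ 0 := div_ne_zero (sub_ne_zero.mpr hb.symm) ha
  have hstep : ∀ y ∈ T, y + δ ∈ T := by
    intro y hy
    obtain ⟨z, hz, hzy⟩ := hsurj (h₂ hy)
    have hz' : a * z = a * (y + δ) := by
      rw [mul_add, mul_div_cancel₀ _ ha]
      linear_combination hzy
    rwa [← mul_left_cancel₀ ha hz']
  obtain ⟨y₀, hy₀⟩ := hT
  have hmul : ∀ k : ℕ, y₀ + k * δ ∈ T := by
    intro k
    induction k with
    | zero => simpa using hy₀
    | succ k ih => simpa [add_mul, ← add_assoc] using hstep _ ih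
  refine eq_univ_of_forall fun r => ?_
  convert hmul ((r - y₀) / δ).val using 1
  rw [ZMod.natCast_zmod_val, div_mul_cancel₀ _ hδ]
  ring

lemma CompletelyMultiplicative.eq_zero_of_dvd {f : ℕ → ℂ} (hf : CompletelyMultiplicative f)
    {p n : ℕ} (hp : f p = 0) (hpn : p ∣ n) : f n = 0 := by
  obtain ⟨w, rfl⟩ := hpn
  rw [hf.2, hp, zero_mul]

theorem kernelSlice_eq_zero_of_two_loops {f : ℕ → ℂ} (hf : CompletelyMultiplicative f)
    {p : ℕ} [Fact p.Prime] (hfp : f p = 0) {q : ℕ} (hpq : ¬ p ∣ q) (c u L M₁ M₂ : ℕ)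
    (h₁ : kernelSlice q (kernelSlice q f c u) L M₁ = kernelSlice q f c u)
    (h₂ : kernelSlice q (kernelSlice q f c u) L M₂ = kernelSlice q f c u)
    (hM : ((M₁ % q ^ L : ℕ) : ZMod p) ≠ ((M₂ % q ^ L : ℕ) : ZMod p)) :
    kernelSlice q f c u = 0 := by
  set s := kernelSlice q f c u
  by_contra hs
  obtain ⟨v, hv⟩ := Function.ne_iff.mp hs
  have hq : (q : ZMod p) ≠ 0 := by rwa [Ne, ZMod.natCast_eq_zero_iff]
  set T : Set (ZMod p) := (↑) '' {x | s x = s v}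
  have hloop : ∀ M, kernelSlice q s L M = s →
      Set.MapsTo (fun y => (q : ZMod p) ^ L * y + ((M % q ^ L : ℕ) : ZMod p)) T T := by
    rintro M hM _ ⟨x, hx, rfl⟩
    refine ⟨q ^ L * x + M % q ^ L, ?_, by push_cast; ring⟩
    rw [Set.mem_ofPred_eq, ← hx, ← congrFun hM x]
    rfl
  have huniv : T = Set.univ := ZMod.eq_univ_of_mapsTo_affine ⟨v, v, rfl, rfl⟩
    (pow_ne_zero L hq) hM (hloop M₁ h₁) (hloop M₂ h₂)
  obtain ⟨x, hx, hxp⟩ := huniv.symm ▸ Set.mem_univ (-((u % q ^ c : ℕ) : ZMod p) / (q : ZMod p) ^ c)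
  have hdvd : p ∣ q ^ c * x + u % q ^ c := by
    rw [← ZMod.natCast_eq_zero_iff]
    push_cast
    rw [hxp, mul_div_cancel₀ _ (pow_ne_zero c hq)]
    ring
  exact hv (by rw [← Set.mem_ofPred_eq.mp hx]; exact hf.eq_zero_of_dvd hfp hdvd)

theorem hasUniqueLoops_kernelSlice {q : ℕ} (hq : 0 < q) {f : ℕ → ℂ}
    (hf : CompletelyMultiplicative f) (hinf : {p : ℕ | p.Prime ∧ f p = 0}.Infinite) {c u : ℕ}
    (hs : kernelSlice q f c u ≠ 0) : HasUniqueLoops q (kernelSlice q f c u) := by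
  intro L M₁ M₂ h₁ h₂
  by_contra hM
  obtain ⟨p, ⟨hp, hfp⟩, hpq⟩ := hinf.exists_gt (q + q ^ L)
  have := Fact.mk hp
  have hlt : ∀ M, M % q ^ L < p := fun M => (Nat.mod_lt _ (by positivity)).trans (by omega)
  refine hs (kernelSlice_eq_zero_of_two_loops hf hfp (Nat.not_dvd_of_pos_of_lt hq (by omega))
    c u L M₁ M₂ h₁ h₂ ?_)
  rwa [Ne, ZMod.natCast_eq_natCast_iff', Nat.mod_eq_of_lt (hlt M₁), Nat.mod_eq_of_lt (hlt M₂)]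

lemma kernelSlice_mem_qKernel {q : ℕ} (hq : 0 < q) (f : ℕ → ℂ) {j : ℕ} (hj : 1 ≤ j) (n : ℕ) :
    kernelSlice q f j n ∈ qKernel q f :=
  ⟨j, hj, n % q ^ j, Nat.mod_lt _ (by positivity), rfl⟩

lemma exists_kernelSlice_of_mem_qKernel {q : ℕ} {f g : ℕ → ℂ} (hg : g ∈ qKernel q f) :
    ∃ j n, g = kernelSlice q f j n := by
  obtain ⟨j, -, r, hr, rfl⟩ := hg
  exact ⟨j, r, funext fun x => by rw [kernelSlice, Nat.mod_eq_of_lt hr]⟩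

theorem card_filter_ne_zero_le {q : ℕ} (hq : 0 < q) {f : ℕ → ℂ} (hf : CompletelyMultiplicative f)
    (hker : (qKernel q f).Finite) (hinf : {p : ℕ | p.Prime ∧ f p = 0}.Infinite) (ℓ : ℕ) :
    #{n ∈ range (q ^ ℓ) | f n ≠ 0} ≤ (q * ℓ + 1) ^ #{g ∈ insert f hker.toFinset | g ≠ 0} := by
  refine (card_le_card (filter_ne_zero_subset_pathSet (fun j n hjn => ?_) ℓ)).trans
    (card_pathSet_le hq _ (fun s hs => ?_) f ℓ)
  · refine mem_filter.mpr ⟨?_, hjn⟩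
    rcases Nat.eq_zero_or_pos j with rfl | hj
    · rw [kernelSlice_zero]
      exact mem_insert_self f _
    · exact mem_insert_of_mem (hker.mem_toFinset.mpr (kernelSlice_mem_qKernel hq f hj n))
  · obtain ⟨hs, hs0⟩ := mem_filter.mp hs
    obtain ⟨j, n, rfl⟩ : ∃ j n, s = kernelSlice q f j n := by
      rcases mem_insert.mp hs with rfl | hs
      · exact ⟨0, 0, (kernelSlice_zero s 0).symm⟩
      · exact exists_kernelSlice_of_mem_qKernel (hker.mem_toFinset.mp hs)
    exact hasUniqueLoops_kernelSlice hq hf hinf hs0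

def CompletelyMultiplicative.toMonoidHom {f : ℕ → ℂ} (hf : CompletelyMultiplicative f) :
    ℕ →* ℂ where
  toFun := f
  map_one' := hf.1
  map_mul' := hf.2

lemma factorization_prod_pow_apply {S : Finset ℕ} (hS : ∀ p ∈ S, p.Prime) (e : S → ℕ) (p : S) :
    (∏ r : S, (r : ℕ) ^ e r).factorization p = e p := by
  rw [Nat.factorization_prod fun (r : S) _ => pow_ne_zero _ (hS r r.2).ne_zero,
    Finsupp.finsetSum_apply]
  simp [fun r : S => (hS r r.2).factorization_pow, Finsupp.single_apply]

theorem pow_card_le_card_filter_ne_zero {f : ℕ → ℂ} (hf : CompletelyMultiplicative f)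
    {S : Finset ℕ} (hS : ∀ p ∈ S, p.Prime ∧ f p ≠ 0) {E N : ℕ} (hN : (∏ p ∈ S, p) ^ E < N) :
    (E + 1) ^ #S ≤ #{n ∈ range N | f n ≠ 0} := by
  calc (E + 1) ^ #S = #(univ : Finset (S → Fin (E + 1))) := by simp
    _ ≤ _ := card_le_card_of_injOn (fun e => ∏ r : S, (r : ℕ) ^ (e r : ℕ)) (fun e _ => ?_)
        (fun e _ e' _ h => funext fun p => Fin.ext ?_)
  · refine mem_filter.mpr ⟨mem_range.mpr (lt_of_le_of_lt ?_ hN), ?_⟩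
    · rw [← prod_pow, ← prod_coe_sort]
      exact prod_le_prod' fun r _ =>
        Nat.pow_le_pow_right (hS r r.2).1.pos (Nat.le_of_lt_succ (e r).2)
    · change hf.toMonoidHom _ ≠ 0
      simp only [map_prod, map_pow]
      exact prod_ne_zero_iff.mpr fun r _ => pow_ne_zero _ (hS r r.2).2
  · have hS' : ∀ p ∈ S, p.Prime := fun p hp => (hS p hp).1
    simpa only [factorization_prod_pow_apply hS'] using congrArg (·.factorization p) h

lemma exists_pow_lt_succ_pow (a b D : ℕ) : ∃ E, (a * E + b) ^ D < (E + 1) ^ (D + 1) := by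
  refine ⟨(a + b + 1) ^ D, ?_⟩
  set E := (a + b + 1) ^ D
  have hE : 1 ≤ E := Nat.one_le_pow _ _ (by omega)
  calc (a * E + b) ^ D ≤ ((a + b + 1) * E) ^ D := Nat.pow_le_pow_left (by nlinarith) _
    _ = E ^ (D + 1) := by rw [mul_pow, pow_succ, mul_comm]
    _ < (E + 1) ^ (D + 1) := Nat.pow_lt_pow_left (lt_add_one E) (by omega)

theorem infinitely_many_zeros (q : ℕ) (hq : 2 ≤ q) (f : ℕ → ℂ)
    (hf : CompletelyMultiplicative f) (hker : (qKernel q f).Finite)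
    (hinf : {p : ℕ | p.Prime ∧ f p = 0}.Infinite) :
    ∃ N : ℕ, ∀ p : ℕ, p.Prime → N ≤ p → f p = 0 := by
  by_contra hcon
  push Not at hcon
  have hnz : {p : ℕ | p.Prime ∧ f p ≠ 0}.Infinite := Set.infinite_of_forall_exists_gt fun N => by
    obtain ⟨p, hp, hNp, hfp⟩ := hcon (N + 1)
    exact ⟨p, ⟨hp, hfp⟩, hNp⟩
  set D := #{g ∈ insert f hker.toFinset | g ≠ 0}
  obtain ⟨S, hS, hScard⟩ := hnz.exists_subset_card_eq (D + 1)
  set P := ∏ p ∈ S, p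
  obtain ⟨E, hE⟩ := exists_pow_lt_succ_pow (q * P) (q + 1) D
  have hP : P ^ E < q ^ (P * E + 1) := calc
    P ^ E ≤ q ^ (P * E) := pow_mul q P E ▸ Nat.pow_le_pow_left (Nat.lt_pow_self hq).le E
    _ < q ^ (P * E + 1) := Nat.pow_lt_pow_right hq (lt_add_one _)
  have hlower := pow_card_le_card_filter_ne_zero hf (fun p hp => hS hp) hP
  have hupper := card_filter_ne_zero_le (by omega) hf hker hinf (P * E + 1)
  rw [hScard] at hlower
  rw [show q * (P * E + 1) + 1 = q * P * E + (q + 1) by ring] at hupper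
  exact (hlower.trans hupper).not_gt hE
end
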